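/- arXiv:2110.05356 — 4 statements merged into one kernel-verified Lean document; each statement's English description precedes it below -/
import Mathlib

section
/- Let ν^{(1)},…,ν^{(N)} be nonnegative integers with ν^{(1)}+⋯+ν^{(N)} = N, where N ≥ 2. Then 0 ≤ D ≤ c ≤ 1, where c := (1/(N)_2) Σ_{i=1}^N (ν^{(i)})_2 and D := (1/(N(N)_2)) Σ_{i=1}^N (ν^{(i)})_2 [ν^{(i)} + (1/N) Σ_{j≠i} (ν^{(j)})^2]. -/
/-! Since every `ν_i ≤ N`, we have `(ν_i)_2 ≤ ν_i (N - 1)`, and summing gives `c ≤ 1`. Likewise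
`ν_j² ≤ N ν_j`, so `Σ_{j≠i} ν_j² ≤ N (N - ν_i)` and the bracket in `D` is at most `N`; this is
exactly `D ≤ c`. -/

open Finset

/-- Conditional pair merger probability `c = (1/(N)_2) Σ_i (ν_i)_2`. -/
noncomputable def cOf (N : ℕ) (ν : Fin N → ℕ) : ℝ :=
  (∑ i, ((ν i).descFactorial 2 : ℝ)) / (N.descFactorial 2 : ℝ)

/-- Multiple-merger bound `D = (1/(N (N)_2)) Σ_i (ν_i)_2 [ν_i + (1/N) Σ_{j≠i} ν_j²]`. -/
noncomputable def DOf (N : ℕ) (ν : Fin N → ℕ) : ℝ :=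
  (∑ i, ((ν i).descFactorial 2 : ℝ) *
      ((ν i : ℝ) + (∑ j ∈ Finset.univ.erase i, ((ν j : ℝ)) ^ 2) / (N : ℝ))) /
    ((N : ℝ) * (N.descFactorial 2 : ℝ))

theorem Finset.sum_descFactorial_two_le {ι : Type*} (s : Finset ι) (ν : ι → ℕ) :
    ∑ i ∈ s, (ν i).descFactorial 2 ≤ (∑ i ∈ s, ν i).descFactorial 2 := by
  have hle : ∀ i ∈ s, ν i ≤ ∑ j ∈ s, ν j := fun i hi =>
    single_le_sum (fun j _ => Nat.zero_le (ν j)) hi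
  have hdesc (n : ℕ) : n.descFactorial 2 = (n - 1) * n := by
    rw [Nat.descFactorial_succ, Nat.descFactorial_one]
  calc ∑ i ∈ s, (ν i).descFactorial 2
      = ∑ i ∈ s, (ν i - 1) * ν i := by simp only [hdesc]
    _ ≤ ∑ i ∈ s, ((∑ j ∈ s, ν j) - 1) * ν i :=
        sum_le_sum fun i hi => Nat.mul_le_mul_right _ (Nat.sub_le_sub_right (hle i hi) 1)
    _ = (∑ i ∈ s, ν i).descFactorial 2 := by rw [← mul_sum, hdesc]

theorem Finset.sum_erase_sq_le {ι : Type*} [DecidableEq ι] {s : Finset ι} {x : ι → ℝ}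
    (hx : ∀ j ∈ s, 0 ≤ x j) {i : ι} (hi : i ∈ s) :
    ∑ j ∈ s.erase i, x j ^ 2 ≤ (∑ j ∈ s, x j) * (∑ j ∈ s, x j - x i) := by
  calc ∑ j ∈ s.erase i, x j ^ 2
      ≤ ∑ j ∈ s.erase i, (∑ k ∈ s, x k) * x j := by
        refine sum_le_sum fun j hj => ?_
        have hjs := mem_of_mem_erase hj
        rw [sq]
        exact mul_le_mul_of_nonneg_right (single_le_sum hx hjs) (hx j hjs)
    _ = (∑ k ∈ s, x k) * (∑ j ∈ s, x j - x i) := by rw [← mul_sum, sum_erase_eq_sub hi]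

theorem add_sum_erase_sq_div_le {N : ℕ} {ν : Fin N → ℕ} (hsum : ∑ i, ν i = N) (i : Fin N) :
    (ν i : ℝ) + (∑ j ∈ univ.erase i, (ν j : ℝ) ^ 2) / N ≤ N := by
  have hN : (0 : ℝ) < N := by exact_mod_cast i.pos
  have hsumR : ∑ j, (ν j : ℝ) = N := by exact_mod_cast hsum
  have hsq := sum_erase_sq_le (s := univ) (x := fun j => (ν j : ℝ))
    (fun j _ => Nat.cast_nonneg _) (mem_univ i)
  rw [hsumR] at hsq
  rw [← le_sub_iff_add_le', div_le_iff₀ hN]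
  linarith

theorem DOf_nonneg (N : ℕ) (ν : Fin N → ℕ) : 0 ≤ DOf N ν := by
  unfold DOf
  positivity

theorem DOf_le_cOf {N : ℕ} {ν : Fin N → ℕ} (hsum : ∑ i, ν i = N) : DOf N ν ≤ cOf N ν := by
  have hbracket : ∀ i, ((ν i : ℝ) + (∑ j ∈ univ.erase i, (ν j : ℝ) ^ 2) / N) / N ≤ 1 :=
    fun i => div_le_one_of_le₀ (add_sum_erase_sq_div_le hsum i) (Nat.cast_nonneg N)
  rw [DOf, cOf, ← div_div, sum_div]
  refine div_le_div_of_nonneg_right (sum_le_sum fun i _ => ?_) (Nat.cast_nonneg _)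
  rw [mul_div_assoc]
  exact mul_le_of_le_one_right (Nat.cast_nonneg _) (hbracket i)

theorem cOf_le_one {N : ℕ} {ν : Fin N → ℕ} (hsum : ∑ i, ν i = N) : cOf N ν ≤ 1 := by
  refine div_le_one_of_le₀ ?_ (Nat.cast_nonneg _)
  exact_mod_cast hsum ▸ sum_descFactorial_two_le univ ν

theorem stmt0_general (N : ℕ) (ν : Fin N → ℕ) (hsum : ∑ i, ν i = N) :
    0 ≤ DOf N ν ∧ DOf N ν ≤ cOf N ν ∧ cOf N ν ≤ 1 :=
  ⟨DOf_nonneg N ν, DOf_le_cOf hsum, cOf_le_one hsum⟩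

theorem stmt0 (N : ℕ) (hN : 2 ≤ N) (ν : Fin N → ℕ) (hsum : ∑ i, ν i = N) :
    0 ≤ DOf N ν ∧ DOf N ν ≤ cOf N ν ∧ cOf N ν ≤ 1 :=
  stmt0_general N ν hsum
end

section
/- Let ν^{(1)},…,ν^{(N)} be nonnegative integers with ν^{(1)}+⋯+ν^{(N)} = N. For each k with 1 ≤ k ≤ N−1: (1/(N)_{k+1}) Σ_{distinct i_1,…,i_{k+1} ∈ [N]} ν^{(i_1)} ⋯ ν^{(i_{k+1})} ≤ (1/(N)_k) Σ_{distinct i_1,…,i_k ∈ [N]} ν^{(i_1)} ⋯ ν^{(i_k)}. Consequently, among partitions ξ of [n] (n ≤ N), the quantity 1 − p_{ξξ} is maximised when ξ is the partition Δ into n singletons. -/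
/-!
Write `S k = ∑_{f : Fin k ↪ ι} ∏ⱼ ν (f j)`. Splitting off one coordinate of an embedding gives
`S (k+1) = ∑_f (∏ⱼ ν (f j)) · ∑_{i ∉ range f} ν i`. A nonzero product forces `ν (f j) ≥ 1` for all
`j`, so the remaining mass `∑_{i ∉ range f} ν i` is at most `N - k`; hence `S (k+1) ≤ (N - k) S k`,
which is exactly the claim since `(N)_{k+1} = (N - k) (N)_k`. Monotonicity in `k` then compares
any partition with `#ξ.parts ≤ n` blocks to the partition into `n` singletons.
-/

open Finset

/-- Identity transition probability for a partition with `k` blocks: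
`p_{ξξ} = (1/(N)_k) Σ_{distinct i_1,…,i_k} ν^{(i_1)} ⋯ ν^{(i_k)}`. -/
noncomputable def pStayFin (N k : ℕ) (ν : Fin N → ℕ) : ℝ :=
  (∑ g : Fin k ↪ Fin N, ∏ j, (ν (g j) : ℝ)) / (N.descFactorial k : ℝ)

section Embeddings

variable {ι : Type*} [Fintype ι] [DecidableEq ι]

theorem sum_embedding_succ_prod {R : Type*} [CommSemiring R] (ν : ι → R) (k : ℕ) :
    ∑ g : Fin (k + 1) ↪ ι, ∏ j, ν (g j) =
      ∑ f : Fin k ↪ ι, (∏ j, ν (f j)) * ∑ i ∈ (univ.map f)ᶜ, ν i := by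
  rw [← (Equiv.embeddingFinSucc k ι).symm.sum_comp, Fintype.sum_sigma]
  refine sum_congr rfl fun f _ => ?_
  rw [mul_sum, sum_subtype _ (p := (· ∉ Set.range f)) (by simp)]
  refine sum_congr rfl fun i _ => ?_
  simp [Fin.prod_univ_succ, mul_comm]

theorem prod_mul_sum_compl_map_le (ν : ι → ℕ) {k : ℕ} (f : Fin k ↪ ι) :
    (∏ j, ν (f j)) * ∑ i ∈ (univ.map f)ᶜ, ν i ≤ (∏ j, ν (f j)) * (∑ i, ν i - k) := by
  obtain hzero | hpos := eq_or_ne (∏ j, ν (f j)) 0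
  · simp [hzero]
  have hk : k ≤ ∑ j, ν (f j) := by
    simpa using card_nsmul_le_sum univ (fun j => ν (f j)) 1
      fun j _ => Nat.one_le_iff_ne_zero.2 (prod_ne_zero_iff.1 hpos j (mem_univ j))
  have hsplit := sum_add_sum_compl (univ.map f) ν
  rw [sum_map] at hsplit
  gcongr
  omega

theorem sum_embedding_succ_prod_le (ν : ι → ℕ) (k : ℕ) :
    ∑ g : Fin (k + 1) ↪ ι, ∏ j, ν (g j) ≤ (∑ i, ν i - k) * ∑ f : Fin k ↪ ι, ∏ j, ν (f j) := by
  rw [sum_embedding_succ_prod, mul_sum]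
  refine sum_le_sum fun f _ => ?_
  rw [mul_comm _ (∏ j, ν (f j))]
  exact prod_mul_sum_compl_map_le ν f

end Embeddings

theorem pStayFin_succ_le {N k : ℕ} (ν : Fin N → ℕ) (hsum : ∑ i, ν i = N) (hk : k < N) :
    pStayFin N (k + 1) ν ≤ pStayFin N k ν := by
  have hNk : ((N - k : ℕ) : ℝ) ≠ 0 := by exact_mod_cast (Nat.sub_pos_of_lt hk).ne'
  have key := sum_embedding_succ_prod_le ν k
  rw [hsum] at key
  calc pStayFin N (k + 1) ν
      = (∑ g : Fin (k + 1) ↪ Fin N, ∏ j, (ν (g j) : ℝ)) /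
          ((N - k : ℕ) * N.descFactorial k) := by
        rw [pStayFin, Nat.descFactorial_succ, Nat.cast_mul]
    _ ≤ ((N - k : ℕ) * ∑ f : Fin k ↪ Fin N, ∏ j, (ν (f j) : ℝ)) /
          ((N - k : ℕ) * N.descFactorial k) := by
        gcongr
        exact_mod_cast key
    _ = pStayFin N k ν := mul_div_mul_left _ _ hNk

theorem pStayFin_antitoneOn {N : ℕ} (ν : Fin N → ℕ) (hsum : ∑ i, ν i = N) :
    AntitoneOn (fun k => pStayFin N k ν) (Set.Iic N) :=
  antitoneOn_of_succ_le Set.ordConnected_Iic fun _ _ _ hk =>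
    pStayFin_succ_le ν hsum (Order.succ_le_iff.1 hk)

theorem stmt6 (N : ℕ) (ν : Fin N → ℕ) (hsum : ∑ i, ν i = N) :
    (∀ k, 1 ≤ k → k ≤ N - 1 → pStayFin N (k + 1) ν ≤ pStayFin N k ν) ∧
    (∀ n, n ≤ N → ∀ ξ : Finpartition (Finset.univ : Finset (Fin n)),
      1 - pStayFin N ξ.parts.card ν ≤ 1 - pStayFin N n ν) := by
  refine ⟨fun k hk hkN => pStayFin_succ_le ν hsum (by omega), fun n hn ξ => ?_⟩
  have hcard : ξ.parts.card ≤ n := by simpa using ξ.card_parts_le_card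
  exact sub_le_sub_left
    (pStayFin_antitoneOn ν hsum (hcard.trans hn : ξ.parts.card ≤ N) hn hcard) 1
end

section
/- Let (c(r))_{r≥1} be a real sequence with 0 ≤ c(r) ≤ 1 for all r, and for t ≥ 0 define τ(t) := inf{s ∈ ℕ : Σ_{r=1}^s c(r) ≥ t}, assumed finite. Fix t > s > 0 and l ∈ ℕ. Then [(t − s)^l − (c(τ(s)) + binom(l,2) Σ_{r=τ(s)+1}^{τ(t)} c(r)^2)(t+1)^l] · 1{c(τ(s)) ≤ t − s} ≤ Σ_{s_1,…,s_l pairwise distinct, each in {τ(s)+1,…,τ(t)}} Π_{j=1}^l c(s_j) ≤ (t − s)^l + c(τ(t)) (t+1)^l, where 1{·} denotes the indicator. -/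
/-- The time change `τ(t) = inf{s ∈ ℕ : Σ_{r=1}^s c(r) ≥ t}`. -/
noncomputable def tauOf (c : ℕ → ℝ) (t : ℝ) : ℕ :=
  sInf {s : ℕ | t ≤ ∑ r ∈ Finset.Icc 1 s, c r}

/-- Sum over tuples `(s_1,…,s_l)` of pairwise distinct elements of `S` of the
products `Π_{j=1}^l f(s_j)`. -/
noncomputable def distinctSum (f : ℕ → ℝ) (l : ℕ) (S : Finset ℕ) : ℝ :=
  ∑ g ∈ (Fintype.piFinset fun _ : Fin l => S).filter fun g => Function.Injective g,
    ∏ j, f (g j)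

/-!
Write `A` for the sum of `c` over the window `{τ(s)+1, …, τ(t)}`. Expanding `A ^ l` as a sum
over all `l`-tuples from the window, the tuples with distinct entries give `distinctSum`, and a
union bound over the `binom(l,2)` pairs of coordinates on which a tuple can repeat bounds the
rest by `binom(l,2) (Σ c(r)²) A^(l-2)`. Since `c ≤ 1`, the partial sums overshoot each level by
less than one step, so `t - s - c(τ(s)) ≤ A ≤ t - s + c(τ(t))`, and convexity of `x ↦ x^l`
gives `(b + ε)^l ≤ b^l + ε (b+1)^l` for `ε ∈ [0, 1]`, which absorbs these overshoots.
-/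

open Finset

theorem Finset.sum_biUnion_le_sum_sum {ι α M : Type*} [DecidableEq α] [AddCommMonoid M]
    [PartialOrder M] [IsOrderedAddMonoid M] {f : α → M} (s : Finset ι) (t : ι → Finset α)
    (hf : ∀ i ∈ s, ∀ a ∈ t i, 0 ≤ f a) :
    ∑ a ∈ s.biUnion t, f a ≤ ∑ i ∈ s, ∑ a ∈ t i, f a := by
  classical
  induction s using Finset.induction_on with
  | empty => simp
  | insert i s hi ih =>
    rw [biUnion_insert, sum_insert hi]
    calc ∑ a ∈ t i ∪ s.biUnion t, f a
        ≤ ∑ a ∈ t i ∪ s.biUnion t, f a + ∑ a ∈ t i ∩ s.biUnion t, f a :=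
          le_add_of_nonneg_right <|
            sum_nonneg fun a ha => hf i (mem_insert_self i s) a (mem_inter.1 ha).1
      _ = ∑ a ∈ t i, f a + ∑ a ∈ s.biUnion t, f a := sum_union_inter
      _ ≤ _ := by grw [ih fun j hj => hf j (mem_insert_of_mem hj)]

section Tuples

variable {α R : Type*} [CommSemiring R] {l : ℕ} {f : α → R} {S : Finset α}

theorem prod_nonneg_of_mem_piFinset [PartialOrder R] [IsOrderedRing R] (hf : ∀ x ∈ S, 0 ≤ f x)
    {g : Fin l → α} (hg : g ∈ Fintype.piFinset fun _ : Fin l => S) : 0 ≤ ∏ k, f (g k) :=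
  prod_nonneg fun k _ => hf _ (Fintype.mem_piFinset.1 hg k)

variable [DecidableEq α]

theorem sum_piFinset_filter_apply_eq_apply {i j : Fin l} (hij : i ≠ j) :
    ∑ g ∈ (Fintype.piFinset fun _ : Fin l => S).filter (fun g => g i = g j), ∏ k, f (g k) =
      (∑ v ∈ S, f v ^ 2) * (∑ v ∈ S, f v) ^ (l - 2) := by
  rw [← sum_fiberwise_of_maps_to (g := fun g => g i) (t := S)
    (fun g hg => Fintype.mem_piFinset.1 (mem_filter.1 hg).1 i), sum_mul]
  refine sum_congr rfl fun v hv => ?_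
  have hfiber : ((Fintype.piFinset fun _ : Fin l => S).filter (fun g => g i = g j)).filter
      (fun g => g i = v) =
      Fintype.piFinset fun k => if k ∈ ({i, j} : Finset (Fin l)) then {v} else S := by
    ext g
    simp only [mem_filter, Fintype.mem_piFinset, mem_insert, mem_singleton]
    constructor
    · rintro ⟨⟨hgS, hgij⟩, hgi⟩ k
      split_ifs with hk
      · rcases hk with rfl | rfl <;> simp [hgi, ← hgij]
      · exact hgS k
    · intro hg
      have hgi : g i = v := by simpa using hg i
      have hgj : g j = v := by simpa using hg j
      refine ⟨⟨fun k => ?_, hgi.trans hgj.symm⟩, hgi⟩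
      have := hg k
      split_ifs at this
      · rwa [mem_singleton.1 this]
      · exact this
  rw [hfiber, ← prod_univ_sum]
  simp_rw [apply_ite (fun T => ∑ x ∈ T, f x), sum_singleton]
  rw [prod_ite, prod_const, prod_const, filter_univ_mem, filter_not, filter_univ_mem,
    card_univ_sdiff, card_pair hij, Fintype.card_fin, sq]

theorem sum_filter_not_injective_le [PartialOrder R] [IsOrderedRing R]
    (hf : ∀ x ∈ S, 0 ≤ f x) :
    ∑ g ∈ (Fintype.piFinset fun _ : Fin l => S).filter (fun g => ¬ Function.Injective g),
        ∏ k, f (g k) ≤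
      (l.choose 2 : R) * ((∑ v ∈ S, f v ^ 2) * (∑ v ∈ S, f v) ^ (l - 2)) := by
  classical
  set P := Fintype.piFinset fun _ : Fin l => S
  set pairs := powersetCard 2 (univ : Finset (Fin l))
  have hcover : P.filter (fun g => ¬ Function.Injective g) ⊆
      pairs.biUnion fun p => P.filter fun g => ¬ Set.InjOn g p := by
    intro g hg
    obtain ⟨hgP, hg⟩ := mem_filter.1 hg
    obtain ⟨a, b, hab, hne⟩ := Function.not_injective_iff.1 hg
    exact mem_biUnion.2 ⟨{a, b}, mem_powersetCard.2 ⟨subset_univ _, card_pair hne⟩,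
      mem_filter.2 ⟨hgP, by rw [coe_pair, Set.injOn_pair]; exact fun h => hne (h hab)⟩⟩
  have hpair : ∀ p ∈ pairs, ∑ g ∈ P.filter (fun g => ¬ Set.InjOn g p), ∏ k, f (g k) =
      (∑ v ∈ S, f v ^ 2) * (∑ v ∈ S, f v) ^ (l - 2) := by
    intro p hp
    obtain ⟨i, j, hij, rfl⟩ := card_eq_two.1 (mem_powersetCard.1 hp).2
    rw [← sum_piFinset_filter_apply_eq_apply (f := f) (S := S) hij]
    refine sum_congr (filter_congr fun g _ => ?_) fun _ _ => rfl
    rw [coe_pair, Set.injOn_pair, Classical.not_imp, and_iff_left hij]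
  have hsub := sum_le_sum_of_subset_of_nonneg (f := fun g => ∏ k, f (g k)) hcover
    fun g hg _ => by
      obtain ⟨_, _, hg⟩ := mem_biUnion.1 hg
      exact prod_nonneg_of_mem_piFinset hf (mem_filter.1 hg).1
  have hunion := sum_biUnion_le_sum_sum (f := fun g => ∏ k, f (g k)) pairs
    (fun p : Finset (Fin l) => P.filter fun g => ¬ Set.InjOn g p)
    fun _ _ g hg => prod_nonneg_of_mem_piFinset (g := g) hf (filter_subset _ _ hg)
  refine hsub.trans (hunion.trans_eq ?_)
  rw [sum_congr rfl hpair, sum_const, card_powersetCard, card_univ, Fintype.card_fin,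
    nsmul_eq_mul]

end Tuples

section DistinctSum

variable {l : ℕ} (f : ℕ → ℝ) (S : Finset ℕ)

theorem distinctSum_add_sum_filter_not_injective :
    distinctSum f l S +
        ∑ g ∈ (Fintype.piFinset fun _ : Fin l => S).filter (fun g => ¬ Function.Injective g),
          ∏ k, f (g k) =
      (∑ v ∈ S, f v) ^ l := by
  rw [distinctSum, sum_filter_add_sum_filter_not, ← prod_univ_sum, prod_const, card_univ,
    Fintype.card_fin]

variable {f S}

theorem distinctSum_nonneg (hf : ∀ x ∈ S, 0 ≤ f x) : 0 ≤ distinctSum f l S :=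
  sum_nonneg fun _ hg => prod_nonneg_of_mem_piFinset hf (mem_filter.1 hg).1

theorem distinctSum_le_pow_sum (hf : ∀ x ∈ S, 0 ≤ f x) :
    distinctSum f l S ≤ (∑ v ∈ S, f v) ^ l := by
  rw [← distinctSum_add_sum_filter_not_injective f S, le_add_iff_nonneg_right]
  exact sum_nonneg fun _ hg => prod_nonneg_of_mem_piFinset hf (mem_filter.1 hg).1

theorem pow_sum_sub_le_distinctSum (hf : ∀ x ∈ S, 0 ≤ f x) :
    (∑ v ∈ S, f v) ^ l -
        (l.choose 2 : ℝ) * ((∑ v ∈ S, f v ^ 2) * (∑ v ∈ S, f v) ^ (l - 2)) ≤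
      distinctSum f l S := by
  rw [← distinctSum_add_sum_filter_not_injective f S]
  linarith [sum_filter_not_injective_le (l := l) hf]

end DistinctSum
theorem add_pow_le_pow_add_mul_pow {b ε T : ℝ} (hb : 0 ≤ b) (hε₀ : 0 ≤ ε)
    (hε₁ : ε ≤ 1) (hbT : b + 1 ≤ T) (l : ℕ) : (b + ε) ^ l ≤ b ^ l + ε * T ^ l := by
  have hconv := (convexOn_pow l).2 (Set.mem_Ici.2 hb) (Set.mem_Ici.2 (by linarith : 0 ≤ b + 1))
    (sub_nonneg.2 hε₁) hε₀ (sub_add_cancel 1 ε)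
  simp only [smul_eq_mul] at hconv
  have hbl : 0 ≤ ε * b ^ l := by positivity
  calc (b + ε) ^ l = ((1 - ε) * b + ε * (b + 1)) ^ l := by ring_nf
    _ ≤ (1 - ε) * b ^ l + ε * (b + 1) ^ l := hconv
    _ ≤ b ^ l + ε * (b + 1) ^ l := by linarith
    _ ≤ b ^ l + ε * T ^ l := by gcongr

section tauOf

variable {c : ℕ → ℝ} {u v : ℝ}

theorem le_sum_Icc_tauOf (h : ∃ s : ℕ, u ≤ ∑ r ∈ Icc 1 s, c r) :
    u ≤ ∑ r ∈ Icc 1 (tauOf c u), c r :=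
  Nat.sInf_mem h

theorem tauOf_mono (huv : u ≤ v) (h : ∃ s : ℕ, v ≤ ∑ r ∈ Icc 1 s, c r) :
    tauOf c u ≤ tauOf c v :=
  Nat.sInf_le (huv.trans (le_sum_Icc_tauOf h))

theorem sum_Icc_tauOf_lt (hu : 0 < u) (h : ∃ s : ℕ, u ≤ ∑ r ∈ Icc 1 s, c r) :
    ∑ r ∈ Icc 1 (tauOf c u), c r < u + c (tauOf c u) := by
  have hmem := le_sum_Icc_tauOf h
  obtain ⟨n, hn⟩ : ∃ n, tauOf c u = n + 1 := by
    refine Nat.exists_eq_add_one.2 (Nat.pos_of_ne_zero fun h0 => ?_)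
    rw [h0, Icc_eq_empty_of_lt zero_lt_one, sum_empty] at hmem
    linarith
  have hlt : ∑ r ∈ Icc 1 n, c r < u :=
    not_le.1 (Nat.notMem_of_lt_sInf (hn ▸ n.lt_add_one : n < tauOf c u))
  rw [hn, sum_Icc_succ_top (by omega)]
  linarith

theorem sum_Icc_tauOf_add_one_mem_Icc {s t : ℝ} (hs : 0 < s) (hst : s ≤ t)
    (h : ∃ n : ℕ, t ≤ ∑ r ∈ Icc 1 n, c r) :
    ∑ r ∈ Icc (tauOf c s + 1) (tauOf c t), c r ∈
      Set.Icc (t - s - c (tauOf c s)) (t - s + c (tauOf c t)) := by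
  have hs' : ∃ n : ℕ, s ≤ ∑ r ∈ Icc 1 n, c r := h.imp fun _ hn => hst.trans hn
  have hsplit := sum_Ioc_consecutive c (Nat.zero_le (tauOf c s)) (tauOf_mono hst h)
  simp only [← Icc_add_one_left_eq_Ioc, zero_add] at hsplit
  have := le_sum_Icc_tauOf hs'
  have := le_sum_Icc_tauOf h
  have := sum_Icc_tauOf_lt hs hs'
  have := sum_Icc_tauOf_lt (hs.trans_le hst) h
  constructor <;> linarith

end tauOf

theorem stmt8_general (c : ℕ → ℝ) (hc : ∀ r, 0 ≤ c r ∧ c r ≤ 1)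
    (hfin : ∀ u : ℝ, 0 ≤ u → ∃ s : ℕ, u ≤ ∑ r ∈ Finset.Icc 1 s, c r)
    (t s : ℝ) (hs : 0 < s) (hst : s < t) (l : ℕ) :
    ((t - s) ^ l -
        (c (tauOf c s) +
            (Nat.choose l 2 : ℝ) * ∑ r ∈ Finset.Icc (tauOf c s + 1) (tauOf c t), (c r) ^ 2) *
          (t + 1) ^ l) * (if c (tauOf c s) ≤ t - s then (1 : ℝ) else 0)
        ≤ distinctSum c l (Finset.Icc (tauOf c s + 1) (tauOf c t)) ∧
      distinctSum c l (Finset.Icc (tauOf c s + 1) (tauOf c t))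
        ≤ (t - s) ^ l + c (tauOf c t) * (t + 1) ^ l := by
  set S := Icc (tauOf c s + 1) (tauOf c t)
  have hc₀ : ∀ r ∈ S, 0 ≤ c r := fun r _ => (hc r).1
  obtain ⟨hA_ge, hA_le⟩ := sum_Icc_tauOf_add_one_mem_Icc hs hst.le (hfin t (by linarith))
  set A := ∑ r ∈ S, c r
  have hA₀ : 0 ≤ A := sum_nonneg hc₀
  have hA_le_succ : A ≤ t + 1 := by linarith [(hc (tauOf c t)).2]
  refine ⟨?_, ?_⟩
  · split_ifs with hτs
    · have hgap : (t - s) ^ l ≤ A ^ l + c (tauOf c s) * (t + 1) ^ l :=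
        calc (t - s) ^ l = (t - s - c (tauOf c s) + c (tauOf c s)) ^ l := by ring_nf
          _ ≤ (t - s - c (tauOf c s)) ^ l + c (tauOf c s) * (t + 1) ^ l :=
            add_pow_le_pow_add_mul_pow (sub_nonneg.2 hτs) (hc _).1 (hc _).2
              (by linarith [(hc (tauOf c s)).1]) l
          _ ≤ A ^ l + c (tauOf c s) * (t + 1) ^ l := by gcongr
      have hcollision : (l.choose 2 : ℝ) * ((∑ r ∈ S, c r ^ 2) * A ^ (l - 2)) ≤
          (l.choose 2 : ℝ) * (∑ r ∈ S, c r ^ 2) * (t + 1) ^ l := by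
        rw [← mul_assoc]
        gcongr
        exact (pow_le_pow_left₀ hA₀ hA_le_succ _).trans
          (pow_le_pow_right₀ (by linarith) (l.sub_le 2))
      linarith [pow_sum_sub_le_distinctSum hc₀ (l := l)]
    · simpa using distinctSum_nonneg hc₀
  · calc distinctSum c l S ≤ A ^ l := distinctSum_le_pow_sum hc₀
      _ ≤ (t - s + c (tauOf c t)) ^ l := by gcongr
      _ ≤ (t - s) ^ l + c (tauOf c t) * (t + 1) ^ l :=
        add_pow_le_pow_add_mul_pow (by linarith) (hc _).1 (hc _).2 (by linarith) l

theorem stmt8 (c : ℕ → ℝ) (hc : ∀ r, 0 ≤ c r ∧ c r ≤ 1)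
    (hfin : ∀ u : ℝ, 0 ≤ u → ∃ s : ℕ, u ≤ ∑ r ∈ Finset.Icc 1 s, c r)
    (t s : ℝ) (hs : 0 < s) (hst : s < t) (l : ℕ) (hl : 1 ≤ l) :
    ((t - s) ^ l -
        (c (tauOf c s) +
            (Nat.choose l 2 : ℝ) * ∑ r ∈ Finset.Icc (tauOf c s + 1) (tauOf c t), (c r) ^ 2) *
          (t + 1) ^ l) * (if c (tauOf c s) ≤ t - s then (1 : ℝ) else 0)
        ≤ distinctSum c l (Finset.Icc (tauOf c s + 1) (tauOf c t)) ∧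
      distinctSum c l (Finset.Icc (tauOf c s + 1) (tauOf c t))
        ≤ (t - s) ^ l + c (tauOf c t) * (t + 1) ^ l :=
  stmt8_general c hc hfin t s hs hst l
end

section
/- Let (c(r))_{r≥1} and (D(r))_{r≥1} be real sequences with 0 ≤ D(r) ≤ c(r) ≤ 1 for all r, and for t ≥ 0 define τ(t) := inf{s ∈ ℕ : Σ_{r=1}^s c(r) ≥ t}, assumed finite. Fix t > 0, l ∈ ℕ and any constant B > 0. Then Σ_{s_1,…,s_l pairwise distinct, each in {1,…,τ(t)}} Π_{j=1}^l [c(s_j) + B D(s_j)] ≤ Σ_{s_1,…,s_l pairwise distinct, each in {1,…,τ(t)}} Π_{j=1}^l c(s_j) + (Σ_{s=1}^{τ(t)} D(s)) (t+1)^{l−1} (1+B)^l. -/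
/-!
Expand `∏ⱼ (c(sⱼ) + B D(sⱼ))` according to the set `T` of positions where the factor `B D` is
chosen. The term `T = ∅` is the distinct sum of `c`. For `T ≠ ∅`, dropping distinctness makes the
sum factorise, giving at most `B^|T| (Σ D)^|T| (Σ c)^(l-|T|) ≤ B^|T| (Σ D) (Σ c)^(l-1)` because
`Σ D ≤ Σ c`; and `Σ c ≤ t + 1` over `{1, …, τ(t)}`, since the partial sums stay below `t` before
`τ(t)` and `c ≤ 1`. Summing `B^|T|` over all `T` gives `(1 + B)^l`.
-/

open Finset

lemma sum_Icc_tauOf_le {c : ℕ → ℝ} (hc : ∀ r, c r ≤ 1) {t : ℝ} (ht : 0 ≤ t) :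
    ∑ r ∈ Icc 1 (tauOf c t), c r ≤ t + 1 := by
  cases hτ : tauOf c t with
  | zero => rw [Icc_eq_empty (by omega), sum_empty]; linarith
  | succ s =>
    have hbefore : ∑ r ∈ Icc 1 s, c r < t :=
      not_le.mp (Nat.notMem_of_lt_sInf (s := {s : ℕ | t ≤ ∑ r ∈ Icc 1 s, c r})
        (by unfold tauOf at hτ; omega))
    rw [sum_Icc_succ_top (by omega)]
    linarith [hc (s + 1)]

lemma prod_mul_prod_compl_eq_prod_ite {ι M : Type*} [Fintype ι] [DecidableEq ι]
    [CommMonoid M] (T : Finset ι) (f g : ι → M) :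
    (∏ j ∈ T, f j) * ∏ j ∈ univ \ T, g j = ∏ j, if j ∈ T then f j else g j := by
  rw [prod_ite, filter_mem_eq_inter, univ_inter, ← sdiff_eq_filter]

section Tuples

variable {α R : Type*} [CommSemiring R]

lemma sum_piFinset_prod_mul_prod_sdiff {l : ℕ} (f g : α → R) (S : Finset α)
    (T : Finset (Fin l)) :
    ∑ x ∈ Fintype.piFinset (fun _ : Fin l => S), (∏ j ∈ T, f (x j)) * ∏ j ∈ univ \ T, g (x j)
      = (∑ s ∈ S, f s) ^ #T * (∑ s ∈ S, g s) ^ (l - #T) := by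
  classical
  calc _ = ∑ x ∈ Fintype.piFinset (fun _ : Fin l => S),
          ∏ j, (if j ∈ T then f else g) (x j) := by
        simp only [prod_mul_prod_compl_eq_prod_ite, ite_apply]
    _ = ∏ j : Fin l, ∑ s ∈ S, (if j ∈ T then f else g) s := (prod_univ_sum _ _).symm
    _ = ∏ j : Fin l, if j ∈ T then ∑ s ∈ S, f s else ∑ s ∈ S, g s := by
        simp only [apply_ite (fun h : α → R => ∑ s ∈ S, h s)]
    _ = _ := by
        rw [← prod_mul_prod_compl_eq_prod_ite, prod_const, prod_const, card_univ_sdiff,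
          Fintype.card_fin]

section Ordered

variable [PartialOrder R] [IsOrderedRing R]

lemma sum_injective_prod_mul_prod_sdiff_le [DecidableEq α] {l : ℕ} {f g : α → R}
    (hf : ∀ a, 0 ≤ f a) (hg : ∀ a, 0 ≤ g a) (S : Finset α) (T : Finset (Fin l)) :
    ∑ x ∈ (Fintype.piFinset fun _ : Fin l => S).filter fun x => Function.Injective x,
        (∏ j ∈ T, f (x j)) * ∏ j ∈ univ \ T, g (x j)
      ≤ (∑ s ∈ S, f s) ^ #T * (∑ s ∈ S, g s) ^ (l - #T) :=
  (sum_le_sum_of_subset_of_nonneg (filter_subset _ _) fun _ _ _ =>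
    mul_nonneg (prod_nonneg fun _ _ => hf _) (prod_nonneg fun _ _ => hg _)).trans_eq
    (sum_piFinset_prod_mul_prod_sdiff f g S T)

lemma pow_mul_pow_sub_le {a b M : R} (ha : 0 ≤ a) (hab : a ≤ b) (hbM : b ≤ M) {k l : ℕ}
    (hk : 1 ≤ k) (hkl : k ≤ l) : a ^ k * b ^ (l - k) ≤ a * M ^ (l - 1) :=
  calc a ^ k * b ^ (l - k) = a * (a ^ (k - 1) * b ^ (l - k)) := by
        rw [← mul_assoc, ← pow_succ', Nat.sub_add_cancel hk]
    _ ≤ a * (b ^ (k - 1) * b ^ (l - k)) := by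
        gcongr
        exact pow_nonneg (ha.trans hab) _
    _ = a * b ^ (l - 1) := by rw [← pow_add]; congr 2; omega
    _ ≤ a * M ^ (l - 1) := by gcongr; exact ha.trans hab

end Ordered

end Tuples

lemma distinctSum_add_eq_sum_powerset (f g : ℕ → ℝ) (l : ℕ) (S : Finset ℕ) :
    distinctSum (fun r => f r + g r) l S
      = ∑ T ∈ (univ : Finset (Fin l)).powerset,
          ∑ x ∈ (Fintype.piFinset fun _ : Fin l => S).filter fun x => Function.Injective x,
            (∏ j ∈ T, g (x j)) * ∏ j ∈ univ \ T, f (x j) := by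
  rw [distinctSum, sum_comm]
  refine sum_congr rfl fun x _ => ?_
  simp_rw [add_comm (f _), prod_add]

lemma distinctSum_add_mul_le {c D : ℕ → ℝ} (hD : ∀ r, 0 ≤ D r) (hDc : ∀ r, D r ≤ c r)
    {B : ℝ} (hB : 0 ≤ B) (l : ℕ) {S : Finset ℕ} {M : ℝ} (hM : ∑ s ∈ S, c s ≤ M) :
    distinctSum (fun r => c r + B * D r) l S
      ≤ distinctSum c l S + (∑ s ∈ S, D s) * M ^ (l - 1) * (1 + B) ^ l := by
  classical
  set F := (Fintype.piFinset fun _ : Fin l => S).filter fun x => Function.Injective x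
  set term : Finset (Fin l) → ℝ := fun T =>
    ∑ x ∈ F, (∏ j ∈ T, B * D (x j)) * ∏ j ∈ univ \ T, c (x j)
  have hc : ∀ r, 0 ≤ c r := fun r => (hD r).trans (hDc r)
  have hsD : 0 ≤ ∑ s ∈ S, D s := sum_nonneg fun r _ => hD r
  have hDc_sum : ∑ s ∈ S, D s ≤ ∑ s ∈ S, c s := sum_le_sum fun r _ => hDc r
  have hM₀ : 0 ≤ M := (hsD.trans hDc_sum).trans hM
  have expand : distinctSum (fun r => c r + B * D r) l S = ∑ T ∈ univ.powerset, term T :=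
    distinctSum_add_eq_sum_powerset _ _ l S
  have term_empty : term ∅ = distinctSum c l S := by simp [term, F, distinctSum]
  have term_le (T : Finset (Fin l)) (hT : T ≠ ∅) :
      term T ≤ B ^ #T * ((∑ s ∈ S, D s) * M ^ (l - 1)) := by
    have hk : 1 ≤ #T := card_pos.mpr (nonempty_iff_ne_empty.mpr hT)
    have hkl : #T ≤ l := card_le_univ T |>.trans_eq (card_fin l)
    calc term T ≤ (∑ s ∈ S, B * D s) ^ #T * (∑ s ∈ S, c s) ^ (l - #T) :=
          sum_injective_prod_mul_prod_sdiff_le (fun r => mul_nonneg hB (hD r)) hc S T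
      _ = B ^ #T * ((∑ s ∈ S, D s) ^ #T * (∑ s ∈ S, c s) ^ (l - #T)) := by
          rw [← mul_sum, mul_pow, mul_assoc]
      _ ≤ B ^ #T * ((∑ s ∈ S, D s) * M ^ (l - 1)) :=
          mul_le_mul_of_nonneg_left (pow_mul_pow_sub_le hsD hDc_sum hM hk hkl) (pow_nonneg hB _)
  have sum_pow_powerset_univ :
      ∑ T ∈ (univ : Finset (Fin l)).powerset, B ^ #T = (1 + B) ^ l := by
    simpa [add_comm] using sum_pow_mul_eq_add_pow B 1 (univ : Finset (Fin l))
  calc distinctSum (fun r => c r + B * D r) l S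
      = distinctSum c l S + ∑ T ∈ univ.powerset.erase ∅, term T := by
        rw [expand, ← add_sum_erase _ _ (empty_mem_powerset _), term_empty]
    _ ≤ distinctSum c l S +
          ∑ T ∈ univ.powerset.erase ∅, B ^ #T * ((∑ s ∈ S, D s) * M ^ (l - 1)) := by
        gcongr with T hT
        exact term_le T (ne_of_mem_erase hT)
    _ ≤ distinctSum c l S +
          ∑ T ∈ univ.powerset, B ^ #T * ((∑ s ∈ S, D s) * M ^ (l - 1)) := by
        gcongr
        exact erase_subset _ _
    _ = distinctSum c l S + (∑ s ∈ S, D s) * M ^ (l - 1) * (1 + B) ^ l := by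
        rw [← sum_mul, sum_pow_powerset_univ]
        ring

theorem stmt9_general (c D : ℕ → ℝ) (hcD : ∀ r, 0 ≤ D r ∧ D r ≤ c r ∧ c r ≤ 1)
    (t : ℝ) (ht : 0 < t) (l : ℕ) (B : ℝ) (hB : 0 < B) :
    distinctSum (fun r => c r + B * D r) l (Finset.Icc 1 (tauOf c t))
      ≤ distinctSum c l (Finset.Icc 1 (tauOf c t)) +
          (∑ s ∈ Finset.Icc 1 (tauOf c t), D s) * (t + 1) ^ (l - 1) * (1 + B) ^ l := by
  exact distinctSum_add_mul_le (fun r => (hcD r).1) (fun r => (hcD r).2.1) hB.le l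
    (sum_Icc_tauOf_le (fun r => (hcD r).2.2) ht.le)

theorem stmt9 (c D : ℕ → ℝ) (hcD : ∀ r, 0 ≤ D r ∧ D r ≤ c r ∧ c r ≤ 1)
    (hfin : ∀ u : ℝ, 0 ≤ u → ∃ s : ℕ, u ≤ ∑ r ∈ Finset.Icc 1 s, c r)
    (t : ℝ) (ht : 0 < t) (l : ℕ) (hl : 1 ≤ l) (B : ℝ) (hB : 0 < B) :
    distinctSum (fun r => c r + B * D r) l (Finset.Icc 1 (tauOf c t))
      ≤ distinctSum c l (Finset.Icc 1 (tauOf c t)) +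
          (∑ s ∈ Finset.Icc 1 (tauOf c t), D s) * (t + 1) ^ (l - 1) * (1 + B) ^ l :=
  stmt9_general c D hcD t ht l B hB
end
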